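/- With the setup described in the context, suppose moreover that v ∈ ℤ^N and a ∈ ℤ^r satisfy ⟨v,u_i⟩ + a_i = 0 for i = 1,…,N, and that m, m' ∈ ℤ^N both satisfy ⟨m,u_i⟩ + a_i = 0 and ⟨m',u_i⟩ + a_i = 0 for i = 1,…,N−k, together with ⟨m,u_i⟩ + a_i ≥ 0 and ⟨m',u_i⟩ + a_i ≥ 0 for all i = 1,…,r. If m − m' ∈ (q−1)·ℤ^N and y ∈ (Kˣ)^k is such that every coordinate of y^{L2} lies in the image of F under the inclusion F ⊆ K, then ∏_{i=1}^r (x(y)_i)^{⟨m,u_i⟩+a_i} = ∏_{i=1}^r (x(y)_i)^{⟨m',u_i⟩+a_i} (products computed in K with the convention 0^0 = 1). (Paper: the binomial part of the kernel description in Theorem 4.6: monomials whose exponents lie in the same face of P and are congruent modulo q−1 have equal evaluations at every rational point of the corresponding torus orbit.) -/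

import Mathlib

/-- The `N×N` submatrix of an `r×N` matrix formed by its first `N` rows. -/
def firstRows {r N : ℕ} (hNr : N ≤ r) (A : Matrix (Fin r) (Fin N) ℤ) :
    Matrix (Fin N) (Fin N) ℤ :=
  Matrix.of fun i j => A ⟨(i : ℕ), by have := i.isLt; omega⟩ j

/-- The `k×k` bottom-right block of an `N×N` matrix (rows and columns
`N-k+1, …, N`). -/
def lowerRight {N k : ℕ} (hkN : k ≤ N) (H : Matrix (Fin N) (Fin N) ℤ) :
    Matrix (Fin k) (Fin k) ℤ :=
  Matrix.of fun i j =>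
    H ⟨N - k + (i : ℕ), by have := i.isLt; omega⟩
      ⟨N - k + (j : ℕ), by have := j.isLt; omega⟩

/-- The `v`-normalized tuple `x(y) ∈ K^r` attached to `y ∈ (Kˣ)^k`. -/
def xvec {K : Type*} [Field K] {k N r : ℕ} (hkN : k ≤ N) (hNr : N ≤ r)
    (y : Fin k → Kˣ) : Fin r → K :=
  fun i =>
    if h1 : (i : ℕ) < N - k then 0
    else if h2 : (i : ℕ) < N then (y ⟨(i : ℕ) - (N - k), by omega⟩ : K)
    else 1

/-!
Write `H = A'T` and `s = T⁻¹(m - m')`. Then `H s = A'(m - m')` is the vector of exponent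
differences on the first `N` rows; it vanishes on the first `N - k` rows, and since `H` is lower
triangular with nonzero diagonal, so does `s`. Hence on the middle block the exponent differences
are `L2 s'` with `s'` the last `k` coordinates of `s`, so the quotient of the two monomials is
`∏ⱼ (y^{L2})ⱼ ^ s'ⱼ`. Each `(y^{L2})ⱼ` lies in `Fˣ`, hence is killed by `q - 1`, which
divides `s'`. (The other coordinates of `x(y)` are `0` with exponent `0`, or `1`.)
-/

open scoped Matrix

theorem Finset.prod_zpow_eq_zpow_sum {G ι : Type*} [CommGroup G] (s : Finset ι) (f : ι → ℤ)
    (u : G) : ∏ i ∈ s, u ^ f i = u ^ ∑ i ∈ s, f i :=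
  Finset.cons_induction (by simp)
    (fun _ _ _ ih => by rw [Finset.sum_cons, Finset.prod_cons, zpow_add, ih]) s

theorem prod_zpow_mulVec {G ι κ : Type*} [CommGroup G] [Fintype ι] [Fintype κ] (t : ι → G)
    (B : Matrix ι κ ℤ) (s : κ → ℤ) :
    ∏ i, t i ^ (B *ᵥ s) i = ∏ j, (∏ i, t i ^ B i j) ^ s j := by
  simp only [Matrix.mulVec, dotProduct, ← Finset.prod_zpow_eq_zpow_sum, zpow_mul,
    ← Finset.prod_zpow]
  exact Finset.prod_comm

theorem prod_zpow_mulVec_eq_one {G ι κ : Type*} [CommGroup G] [Fintype ι] [Fintype κ]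
    (t : ι → G) (B : Matrix ι κ ℤ) {n : ℤ} (ht : ∀ j, (∏ i, t i ^ B i j) ^ n = 1)
    {s : κ → ℤ} (hs : ∀ j, n ∣ s j) : ∏ i, t i ^ (B *ᵥ s) i = 1 := by
  rw [prod_zpow_mulVec]
  refine Finset.prod_eq_one fun j _ => ?_
  obtain ⟨c, hc⟩ := hs j
  rw [hc, zpow_mul, ht, one_zpow]

theorem Units.zpow_card_sub_one_eq_one_of_mem_range {F K : Type*} [Field F] [Fintype F]
    [Semiring K] [Algebra F K] (u : Kˣ) (hu : (u : K) ∈ Set.range (algebraMap F K)) :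
    u ^ ((Fintype.card F : ℤ) - 1) = 1 := by
  obtain ⟨x, hx⟩ := hu
  have hfix : u ^ Fintype.card F = u :=
    Units.ext (by rw [Units.val_pow_eq_pow_val, ← hx, ← map_pow, FiniteField.pow_card])
  rw [zpow_sub_one, zpow_natCast, hfix, mul_inv_cancel]

theorem Matrix.IsLowerTriangular.eqOn_zero_of_mulVec_eqOn_zero {ι R : Type*} [LinearOrder ι]
    [Fintype ι] [NonUnitalNonAssocSemiring R] [NoZeroDivisors R] {H : Matrix ι ι R}
    (hH : H.IsLowerTriangular) (hdiag : ∀ i, H i i ≠ 0) {S : Set ι} (hS : IsLowerSet S)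
    {s : ι → R} (hHs : Set.EqOn (H *ᵥ s) 0 S) : Set.EqOn s 0 S := by
  intro i
  induction i using WellFoundedLT.induction with
  | _ i ih =>
    intro hi
    have hdiagonal : (H *ᵥ s) i = H i i * s i := by
      refine Finset.sum_eq_single i (fun j _ hji => ?_) (by simp)
      rcases hji.lt_or_gt with hj | hj
      · exact mul_eq_zero_of_right _ (ih j hj (hS hj.le hi))
      · exact mul_eq_zero_of_left (hH hj) _
    exact (mul_eq_zero.mp (hdiagonal ▸ hHs hi)).resolve_left (hdiag i)

theorem Matrix.IsLowerTriangular.apply_self_ne_zero {ι R : Type*} [LinearOrder ι] [Fintype ι]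
    [DecidableEq ι] [CommRing R] {H : Matrix ι ι R} (hH : H.IsLowerTriangular)
    (hdet : H.det ≠ 0) (i : ι) : H i i ≠ 0 :=
  fun hi => hdet <| by
    rw [H.det_of_isLowerTriangular hH]
    exact Finset.prod_eq_zero (Finset.mem_univ i) hi

theorem firstRows_mulVec_apply {r N : ℕ} (hNr : N ≤ r) (A : Matrix (Fin r) (Fin N) ℤ)
    (v : Fin N → ℤ) (i : Fin N) :
    (firstRows hNr A *ᵥ v) i = ∑ j, v j * A (Fin.castLE hNr i) j :=
  dotProduct_comm (firstRows hNr A i) v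

section BottomBlock

variable {k N : ℕ} (hkN : k ≤ N)

def bottomIndex (j : Fin k) : Fin N :=
  ⟨N - k + j, by omega⟩

theorem bottomIndex_injective : Function.Injective (bottomIndex hkN) := fun i j h => by
  have : N - k + (i : ℕ) = N - k + j := congrArg Fin.val h
  exact Fin.ext (by omega)

theorem lt_of_notMem_range_bottomIndex {i : Fin N} (hi : i ∉ Set.range (bottomIndex hkN)) :
    (i : ℕ) < N - k := by
  by_contra! h
  exact hi ⟨⟨i - (N - k), by omega⟩, Fin.ext (by simp [bottomIndex]; omega)⟩

theorem mulVec_bottomIndex (H : Matrix (Fin N) (Fin N) ℤ) {s : Fin N → ℤ}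
    (hs : ∀ i : Fin N, (i : ℕ) < N - k → s i = 0) (j : Fin k) :
    (H *ᵥ s) (bottomIndex hkN j) = (lowerRight hkN H *ᵥ (s ∘ bottomIndex hkN)) j :=
  (Fintype.sum_of_injective _ (bottomIndex_injective hkN) _ _
    (fun _ hi => by rw [hs _ (lt_of_notMem_range_bottomIndex hkN hi), mul_zero])
    (fun _ => rfl)).symm

variable {K : Type*} [Field K] {r : ℕ} (hNr : N ≤ r) (y : Fin k → Kˣ)

theorem xvec_castLE_bottomIndex (j : Fin k) :
    xvec hkN hNr y (Fin.castLE hNr (bottomIndex hkN j)) = y j := by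
  have hj := j.isLt
  rw [xvec, dif_neg (by simp [bottomIndex]), dif_pos (by simp [bottomIndex]; omega)]
  congr
  simp [bottomIndex]

theorem prod_xvec_pow (e : Fin r → ℕ) (he : ∀ i : Fin r, (i : ℕ) < N - k → e i = 0) :
    ∏ i, xvec hkN hNr y i ^ e i = ∏ j, (y j : K) ^ e (Fin.castLE hNr (bottomIndex hkN j)) := by
  refine (Fintype.prod_of_injective _ ((Fin.castLE_injective hNr).comp
    (bottomIndex_injective hkN)) _ _ (fun i hi => ?_)
    (fun j => by rw [Function.comp_apply, xvec_castLE_bottomIndex])).symm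
  rcases lt_or_ge (i : ℕ) (N - k) with h | h
  · rw [he i h, pow_zero]
  · have hN : N ≤ (i : ℕ) := by
      by_contra! hN
      exact hi ⟨⟨i - (N - k), by omega⟩, Fin.ext (by simp [bottomIndex]; omega)⟩
    simp only [xvec, dif_neg (show ¬ (i : ℕ) < N - k by omega), dif_neg (not_lt.mpr hN), one_pow]

theorem prod_xvec_pow_toNat (e : Fin r → ℤ) (he0 : ∀ i : Fin r, (i : ℕ) < N - k → e i = 0)
    (he : ∀ i, 0 ≤ e i) :
    ∏ i, xvec hkN hNr y i ^ (e i).toNat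
      = ((∏ j, y j ^ e (Fin.castLE hNr (bottomIndex hkN j)) : Kˣ) : K) := by
  rw [prod_xvec_pow hkN hNr y _ fun i hi => by rw [he0 i hi, Int.toNat_zero], Units.coe_prod]
  refine Finset.prod_congr rfl fun j _ => ?_
  conv_rhs => rw [← Int.toNat_of_nonneg (he _), zpow_natCast, Units.val_pow_eq_pow_val]

end BottomBlock

theorem stmt_11_general {F K : Type*} [Field F] [Fintype F] [Field K] [Algebra F K]
    {k N r : ℕ}
    (hkN : k ≤ N) (hNr : N ≤ r)
    (A : Matrix (Fin r) (Fin N) ℤ)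
    (T : Matrix (Fin N) (Fin N) ℤ) (hT : IsUnit T.det)
    (hlow : ∀ i j : Fin N, (i : ℕ) < (j : ℕ) → (firstRows hNr A * T) i j = 0)
    (hdet : (firstRows hNr A).det ≠ 0)
    (m m' : Fin N → ℤ) (a : Fin r → ℤ)
    (hm0 : ∀ i : Fin r, (i : ℕ) < N - k → (∑ j : Fin N, m j * A i j) + a i = 0)
    (hm'0 : ∀ i : Fin r, (i : ℕ) < N - k → (∑ j : Fin N, m' j * A i j) + a i = 0)
    (hm : ∀ i : Fin r, 0 ≤ (∑ j : Fin N, m j * A i j) + a i)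
    (hm' : ∀ i : Fin r, 0 ≤ (∑ j : Fin N, m' j * A i j) + a i)
    (hcong : ∀ j : Fin N, ((Fintype.card F : ℤ) - 1) ∣ (m j - m' j))
    (y : Fin k → Kˣ)
    (hy : ∀ j : Fin k,
      ((∏ i : Fin k, y i ^ lowerRight hkN (firstRows hNr A * T) i j : Kˣ) : K)
        ∈ Set.range (algebraMap F K)) :
    ∏ i : Fin r, (xvec hkN hNr y i) ^ ((∑ j : Fin N, m j * A i j) + a i).toNat
      = ∏ i : Fin r, (xvec hkN hNr y i) ^ ((∑ j : Fin N, m' j * A i j) + a i).toNat := by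
  set H := firstRows hNr A * T with hH
  set s := T⁻¹ *ᵥ (m - m') with hs
  have hHs : ∀ i : Fin N, (H *ᵥ s) i
      = ((∑ j, m j * A (Fin.castLE hNr i) j) + a (Fin.castLE hNr i))
        - ((∑ j, m' j * A (Fin.castLE hNr i) j) + a (Fin.castLE hNr i)) := fun i => by
    rw [hs, Matrix.mulVec_mulVec, hH, Matrix.mul_assoc, Matrix.mul_nonsing_inv _ hT,
      Matrix.mul_one, Matrix.mulVec_sub, Pi.sub_apply, firstRows_mulVec_apply,
      firstRows_mulVec_apply, add_sub_add_right_eq_sub]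
  have hHlow : H.IsLowerTriangular := fun i j hij => hlow i j hij
  have hdiag : ∀ i, H i i ≠ 0 := hHlow.apply_self_ne_zero <| by
    rw [hH, Matrix.det_mul]
    exact mul_ne_zero hdet hT.ne_zero
  have hs0 : ∀ i : Fin N, (i : ℕ) < N - k → s i = 0 := fun i hi =>
    hHlow.eqOn_zero_of_mulVec_eqOn_zero hdiag (S := {i | (i : ℕ) < N - k})
      (fun _ _ hba ha => lt_of_le_of_lt (Fin.le_def.mp hba) ha)
      (fun i (hi : (i : ℕ) < N - k) => by
        rw [hHs, hm0 _ hi, hm'0 _ hi, sub_self, Pi.zero_apply]) hi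
  have hdvd : ∀ i, ((Fintype.card F : ℤ) - 1) ∣ s i := fun i => by
    simp only [hs, Matrix.mulVec, dotProduct, Pi.sub_apply]
    exact Finset.dvd_sum fun u _ => (hcong u).mul_left _
  rw [prod_xvec_pow_toNat hkN hNr y _ hm0 hm, prod_xvec_pow_toNat hkN hNr y _ hm'0 hm']
  congr 1
  rw [← div_eq_one, ← Finset.prod_div_distrib]
  calc _ = ∏ j, y j ^ (lowerRight hkN H *ᵥ (s ∘ bottomIndex hkN)) j :=
        Finset.prod_congr rfl fun j _ => by
          rw [div_eq_mul_inv, ← zpow_sub, ← hHs, mulVec_bottomIndex hkN H hs0]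
    _ = 1 := prod_zpow_mulVec_eq_one y _
        (fun j => Units.zpow_card_sub_one_eq_one_of_mem_range _ (hy j)) fun j => hdvd _

/-- binomial part of the kernel description, Theorem 4.6:
monomials whose exponent vectors `m, m'` lie in the same face and are congruent
modulo `q-1` take the same value at every `F_q`-rational normalized tuple. -/
theorem stmt_11 {F K : Type*} [Field F] [Fintype F] [Field K] [Algebra F K]
    [IsAlgClosure F K] {k N r : ℕ}
    (hk : 0 < k) (hkN : k ≤ N) (hNr : N ≤ r)
    (A : Matrix (Fin r) (Fin N) ℤ)
    (T : Matrix (Fin N) (Fin N) ℤ) (hT : IsUnit T.det)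
    (hlow : ∀ i j : Fin N, (i : ℕ) < (j : ℕ) → (firstRows hNr A * T) i j = 0)
    (hdet : (firstRows hNr A).det ≠ 0)
    (hchar : ∀ p : ℕ, 0 < p → CharP K p → ¬ ((p : ℤ) ∣ (firstRows hNr A).det))
    (v m m' : Fin N → ℤ) (a : Fin r → ℤ)
    (hv : ∀ i : Fin r, (i : ℕ) < N → (∑ j : Fin N, v j * A i j) + a i = 0)
    (hm0 : ∀ i : Fin r, (i : ℕ) < N - k → (∑ j : Fin N, m j * A i j) + a i = 0)
    (hm'0 : ∀ i : Fin r, (i : ℕ) < N - k → (∑ j : Fin N, m' j * A i j) + a i = 0)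
    (hm : ∀ i : Fin r, 0 ≤ (∑ j : Fin N, m j * A i j) + a i)
    (hm' : ∀ i : Fin r, 0 ≤ (∑ j : Fin N, m' j * A i j) + a i)
    (hcong : ∀ j : Fin N, ((Fintype.card F : ℤ) - 1) ∣ (m j - m' j))
    (y : Fin k → Kˣ)
    (hy : ∀ j : Fin k,
      ((∏ i : Fin k, y i ^ lowerRight hkN (firstRows hNr A * T) i j : Kˣ) : K)
        ∈ Set.range (algebraMap F K)) :
    ∏ i : Fin r, (xvec hkN hNr y i) ^ ((∑ j : Fin N, m j * A i j) + a i).toNat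
      = ∏ i : Fin r, (xvec hkN hNr y i) ^ ((∑ j : Fin N, m' j * A i j) + a i).toNat :=
  stmt_11_general hkN hNr A T hT hlow hdet m m' a hm0 hm'0 hm hm' hcong y hy
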